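/- Assume 0 ≤ c ≤ min P and let prices p^1, …, p^T be drawn independently with p^t ∼ π^t. For every ε > 0, Pr[ R̃^T(c) − R̄^T(c) ≥ ε ] ≤ 2k²·exp( −ε² / (2k² Σ_{t=1}^T d_t²) ), where R̃^T(c) = Σ_{p∈P} max_{q∈P} R̃^T_{p,q}(c), R̄^T(c) = Σ_{p∈P} max_{q∈P} R̄^T_{p,q}(c), and d_t = (1/T)·(1/min_{p′∈C^t} π^t(p′) + 1)·p̄. -/

import Mathlib

open Finset

def IsPMF (P : Finset ℝ) (f : ℝ → ℝ) : Prop :=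
  (∀ p, 0 ≤ f p) ∧ (∑ p ∈ P, f p = 1) ∧ ∀ p, p ∉ P → f p = 0

noncomputable def suppF (P : Finset ℝ) (f : ℝ → ℝ) : Finset ℝ :=
  P.filter fun p => 0 < f p

def IsAllocSeq (P : Finset ℝ) {T : ℕ} (x : Fin T → ℝ → ℝ) : Prop :=
  ∀ t : Fin T, (∀ p ∈ P, x t p ∈ Set.Icc (0:ℝ) 1) ∧
    ∀ p ∈ P, ∀ q ∈ P, p ≤ q → x t q ≤ x t p

noncomputable def regret (P : Finset ℝ) (hP : P.Nonempty) {T : ℕ}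
    (π x : Fin T → ℝ → ℝ) (c : ℝ) : ℝ :=
  haveI : Nonempty {p : ℝ // p ∈ P} := Finset.nonempty_coe_sort.mpr hP
  Finset.univ.sup' Finset.univ_nonempty
    fun σ : {p : ℝ // p ∈ P} → {p : ℝ // p ∈ P} =>
      (T : ℝ)⁻¹ * ∑ t : Fin T, ∑ p ∈ P.attach,
        π t p.1 * (((σ p).1 - c) * x t (σ p).1 - (p.1 - c) * x t p.1)

noncomputable def pessA (P : Finset ℝ) {T : ℕ} (π x : Fin T → ℝ → ℝ)
    (t : Fin T) (p : ℝ) : ℝ :=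
  if p ∈ suppF P (π t) then x t p
  else if h : ((suppF P (π t)).filter fun r => r ≤ p).Nonempty then
    x t (((suppF P (π t)).filter fun r => r ≤ p).max' h)
  else 1

noncomputable def xhatF (P : Finset ℝ) {T : ℕ} (π x : Fin T → ℝ → ℝ)
    (t : Fin T) (s : ℝ) (p : ℝ) : ℝ :=
  if p ∈ suppF P (π t) then (if p = s then x t s / π t s else 0)
  else if h : ((suppF P (π t)).filter fun r => r ≤ p).Nonempty then
    (if ((suppF P (π t)).filter fun r => r ≤ p).max' h = s then x t s / π t s else 0)
  else 1

open Classical in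
noncomputable def probM (P : Finset ℝ) {T : ℕ} (π : Fin T → ℝ → ℝ)
    (E : (Fin T → ℝ) → Prop) : ℝ :=
  ∑ ps ∈ Fintype.piFinset (fun _ : Fin T => P),
    if E ps then ∏ t, π t (ps t) else 0

noncomputable def Rtilpq (P : Finset ℝ) {T : ℕ} (π x : Fin T → ℝ → ℝ)
    (c p q : ℝ) (ps : Fin T → ℝ) : ℝ :=
  (T : ℝ)⁻¹ * ∑ t : Fin T, π t p *
    ((q - c) * xhatF P π x t (ps t) q - (p - c) * xhatF P π x t (ps t) p)

noncomputable def Rbarpq (P : Finset ℝ) {T : ℕ} (π x : Fin T → ℝ → ℝ)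
    (c p q : ℝ) : ℝ :=
  (T : ℝ)⁻¹ * ∑ t : Fin T, π t p *
    ((q - c) * pessA P π x t q - (p - c) * pessA P π x t p)

/-! Each deviation `R̃_{p,q} - R̄_{p,q}` is a sum over rounds of independent terms. They are
centred because the propensity-score estimate is unbiased for the pessimistic allocation, and
bounded by `d_t` because the estimate never exceeds `1 / min_{C^t} π^t`, so Hoeffding's inequality
applies to each of the `k²` pairs at level `ε / k`. If the difference of the sums of maxima
reaches `ε`, then some pair deviation reaches `ε / k`, and a union bound finishes. -/

open MeasureTheory ProbabilityTheory

noncomputable def pmfMeasure (P : Finset ℝ) (f : ℝ → ℝ) : Measure ℝ :=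
  ∑ a ∈ P, ENNReal.ofReal (f a) • Measure.dirac a

section PMFMeasure
variable {P : Finset ℝ} {f : ℝ → ℝ}

lemma integrable_pmfMeasure (h : ℝ → ℝ) : Integrable h (pmfMeasure P f) :=
  integrable_finsetSum_measure.2 fun _ _ =>
    (integrable_dirac (by simp)).smul_measure ENNReal.ofReal_ne_top

lemma integral_pmfMeasure (hf : ∀ a, 0 ≤ f a) (h : ℝ → ℝ) :
    ∫ r, h r ∂pmfMeasure P f = ∑ a ∈ P, f a * h a := by
  rw [pmfMeasure, integral_finsetSum_measure fun _ _ =>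
    (integrable_dirac (by simp)).smul_measure ENNReal.ofReal_ne_top]
  refine sum_congr rfl fun a _ => ?_
  rw [integral_smul_measure, integral_dirac, ENNReal.toReal_ofReal (hf a), smul_eq_mul]

lemma IsPMF.isProbabilityMeasure (hf : IsPMF P f) : IsProbabilityMeasure (pmfMeasure P f) := by
  constructor
  simp only [pmfMeasure, Measure.coe_finsetSum, Finset.sum_apply, Measure.smul_apply,
    measure_univ, smul_eq_mul, mul_one]
  rw [← ENNReal.ofReal_sum_of_nonneg fun a _ => hf.1 a, hf.2.1, ENNReal.ofReal_one]

lemma ae_pmfMeasure {p : ℝ → Prop} (h : ∀ a ∈ P, 0 < f a → p a) :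
    ∀ᵐ r ∂pmfMeasure P f, p r := by
  rw [ae_iff]
  simp only [pmfMeasure, Measure.coe_finsetSum, Finset.sum_apply, Measure.smul_apply,
    smul_eq_mul, Measure.dirac_apply]
  refine sum_eq_zero fun a ha => ?_
  by_cases hfa : 0 < f a
  · simp [h a ha hfa]
  · simp [ENNReal.ofReal_eq_zero.2 (not_lt.1 hfa)]

lemma IsPMF.sum_mul_exp_le (hf : IsPMF P f) {g : ℝ → ℝ} {d : ℝ}
    (hmean : ∑ a ∈ P, f a * g a = 0) (hbd : ∀ a ∈ P, 0 < f a → |g a| ≤ d) (l : ℝ) :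
    ∑ a ∈ P, f a * Real.exp (l * g a) ≤ Real.exp (l ^ 2 * d ^ 2 / 2) := by
  have := hf.isProbabilityMeasure
  have hoeffding := (hasSubgaussianMGF_of_mem_Icc_of_integral_eq_zero
    (integrable_pmfMeasure g).aemeasurable
    (ae_pmfMeasure fun a ha hfa => abs_le.1 (hbd a ha hfa))
    ((integral_pmfMeasure hf.1 g).trans hmean)).mgf_le l
  rw [mgf, integral_pmfMeasure hf.1] at hoeffding
  convert hoeffding using 3
  simp only [sub_neg_eq_add, NNReal.coe_pow, NNReal.coe_div, coe_nnnorm, Real.norm_eq_abs,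
    NNReal.coe_ofNat, div_pow, sq_abs]
  ring

end PMFMeasure

lemma IsPMF.le_one {P : Finset ℝ} {f : ℝ → ℝ} (hf : IsPMF P f) {a : ℝ} (ha : a ∈ P) :
    f a ≤ 1 :=
  hf.2.1 ▸ single_le_sum (fun b _ => hf.1 b) ha

section ProductMeasure
variable {P : Finset ℝ} {T : ℕ} {π : Fin T → ℝ → ℝ}

open Classical in
lemma probM_le_sum_of_forall_exists (hπ : ∀ t a, 0 ≤ π t a) {ι : Type*} {s : Finset ι}
    {E : (Fin T → ℝ) → Prop} {F : ι → (Fin T → ℝ) → Prop}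
    (h : ∀ ps, E ps → ∃ i ∈ s, F i ps) :
    probM P π E ≤ ∑ i ∈ s, probM P π (F i) := by
  unfold probM
  rw [sum_comm]
  refine sum_le_sum fun ps _ => ?_
  have hw : 0 ≤ ∏ t, π t (ps t) := prod_nonneg fun t _ => hπ t _
  have hterm : ∀ i, 0 ≤ if F i ps then ∏ t, π t (ps t) else 0 := fun i => by
    split_ifs <;> simp [hw]
  split_ifs with hE
  · obtain ⟨i, hi, hF⟩ := h ps hE
    exact (if_pos hF).symm.le.trans (single_le_sum (fun j _ => hterm j) hi)
  · exact sum_nonneg fun i _ => hterm i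

lemma probM_le_exp_of_le_sum (hpmf : ∀ t, IsPMF P (π t)) {g : Fin T → ℝ → ℝ}
    {d : Fin T → ℝ} (hmean : ∀ t, ∑ a ∈ P, π t a * g t a = 0)
    (hbd : ∀ t, ∀ a ∈ P, 0 < π t a → |g t a| ≤ d t) (hd : 0 < ∑ t, d t ^ 2)
    {s : ℝ} (hs : 0 ≤ s) :
    probM P π (fun ps => s ≤ ∑ t, g t (ps t)) ≤ Real.exp (-s ^ 2 / (2 * ∑ t, d t ^ 2)) := by
  -- the minimiser of `-l s + l² ∑ d_t² / 2`
  set l := s / ∑ t, d t ^ 2 with hl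
  have hw : ∀ ps : Fin T → ℝ, 0 ≤ ∏ t, π t (ps t) := fun ps =>
    prod_nonneg fun t _ => (hpmf t).1 _
  have hmarkov : ∀ ps : Fin T → ℝ, (if s ≤ ∑ t, g t (ps t) then ∏ t, π t (ps t) else 0) ≤
      Real.exp (-(l * s)) * ∏ t, (π t (ps t) * Real.exp (l * g t (ps t))) := by
    intro ps
    rw [prod_mul_distrib, ← Real.exp_sum, mul_left_comm, ← Real.exp_add, ← mul_sum]
    split_ifs with hle
    · refine le_mul_of_one_le_right (hw ps) (Real.one_le_exp ?_)
      nlinarith [div_nonneg hs hd.le]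
    · exact mul_nonneg (hw ps) (Real.exp_pos _).le
  calc probM P π (fun ps => s ≤ ∑ t, g t (ps t))
      ≤ ∑ ps ∈ Fintype.piFinset fun _ => P,
          Real.exp (-(l * s)) * ∏ t, (π t (ps t) * Real.exp (l * g t (ps t))) :=
        sum_le_sum fun ps _ => hmarkov ps
    _ = Real.exp (-(l * s)) * ∏ t, ∑ a ∈ P, π t a * Real.exp (l * g t a) := by
        rw [← mul_sum, prod_univ_sum]
    _ ≤ Real.exp (-(l * s)) * ∏ t, Real.exp (l ^ 2 * d t ^ 2 / 2) := by
        refine mul_le_mul_of_nonneg_left (prod_le_prod (fun t _ => ?_) fun t _ => ?_)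
          (Real.exp_pos _).le
        · exact sum_nonneg fun a _ => mul_nonneg ((hpmf t).1 a) (Real.exp_pos _).le
        · exact (hpmf t).sum_mul_exp_le (hmean t) (hbd t) l
    _ = Real.exp (-s ^ 2 / (2 * ∑ t, d t ^ 2)) := by
        rw [← Real.exp_sum, ← Real.exp_add, ← sum_div, ← mul_sum]
        congr 1
        rw [hl]
        field_simp
        ring

end ProductMeasure

lemma exists_le_sub_of_le_sum_sup'_sub {α β : Type*} {s : Finset α} {u : Finset β}
    (hs : s.Nonempty) (hu : u.Nonempty) {A B : α → β → ℝ} {ε : ℝ}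
    (h : ε ≤ ∑ a ∈ s, u.sup' hu (A a) - ∑ a ∈ s, u.sup' hu (B a)) :
    ∃ i ∈ s ×ˢ u, ε / s.card ≤ A i.1 i.2 - B i.1 i.2 := by
  by_contra! hlt
  have hsup : ∀ a ∈ s, u.sup' hu (A a) - u.sup' hu (B a) < ε / s.card := by
    intro a ha
    obtain ⟨b, hb, hAb⟩ := exists_mem_eq_sup' hu (A a)
    have := hlt (a, b) (mem_product.2 ⟨ha, hb⟩)
    have := le_sup' (B a) hb
    linarith
  have hcard : (0 : ℝ) < s.card := by exact_mod_cast hs.card_pos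
  have := sum_lt_sum_of_nonempty hs hsup
  rw [sum_sub_distrib, sum_const, nsmul_eq_mul, mul_div_cancel₀ _ hcard.ne'] at this
  linarith

section Estimator
variable {P : Finset ℝ} {T : ℕ} {π x : Fin T → ℝ → ℝ} {t : Fin T}

lemma sum_mul_xhatF (hπ : IsPMF P (π t)) (r : ℝ) :
    ∑ s ∈ P, π t s * xhatF P π x t s r = pessA P π x t r := by
  have hpoint : ∀ u ∈ suppF P (π t),
      ∑ s ∈ P, π t s * (if u = s then x t s / π t s else 0) = x t u := by
    intro u hu
    obtain ⟨huP, hu⟩ := mem_filter.1 hu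
    simp only [mul_ite, mul_zero, sum_ite_eq, if_pos huP]
    field_simp
  unfold xhatF pessA
  split_ifs with hr h
  · exact hpoint r hr
  · exact hpoint _ (mem_filter.1 (max'_mem _ h)).1
  · rw [← sum_mul, hπ.2.1, one_mul]

lemma pessA_mem_Icc (hx : IsAllocSeq P x) (r : ℝ) : pessA P π x t r ∈ Set.Icc 0 1 := by
  unfold pessA
  split_ifs with hr h
  · exact (hx t).1 r (filter_subset _ _ hr)
  · exact (hx t).1 _ (filter_subset _ _ (mem_filter.1 (max'_mem _ h)).1)
  · exact ⟨zero_le_one, le_rfl⟩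

lemma xhatF_mem_Icc (hπ : IsPMF P (π t)) (hne : (suppF P (π t)).Nonempty)
    (hx : IsAllocSeq P x) {s : ℝ} (hs : s ∈ suppF P (π t)) (r : ℝ) :
    xhatF P π x t s r ∈ Set.Icc 0 (1 / (suppF P (π t)).inf' hne (π t)) := by
  set m := (suppF P (π t)).inf' hne (π t)
  obtain ⟨hsP, hπs⟩ := mem_filter.1 hs
  have hm : 0 < m := (lt_inf'_iff hne).2 fun a ha => (mem_filter.1 ha).2
  have hratio : x t s / π t s ∈ Set.Icc 0 (1 / m) :=
    ⟨div_nonneg ((hx t).1 s hsP).1 hπs.le,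
      div_le_div₀ zero_le_one ((hx t).1 s hsP).2 hm (inf'_le _ hs)⟩
  have hzero : (0 : ℝ) ∈ Set.Icc 0 (1 / m) := ⟨le_rfl, by positivity⟩
  unfold xhatF
  split_ifs
  any_goals first | exact hratio | exact hzero
  obtain ⟨a, ha⟩ := hne
  refine ⟨zero_le_one, (one_le_div hm).2 ((inf'_le _ ha).trans (hπ.le_one ?_))⟩
  exact filter_subset _ _ ha

end Estimator

noncomputable def pairDeviation (P : Finset ℝ) {T : ℕ} (π x : Fin T → ℝ → ℝ) (c p q : ℝ)
    (t : Fin T) (s : ℝ) : ℝ :=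
  (T : ℝ)⁻¹ * π t p * (((q - c) * xhatF P π x t s q - (p - c) * xhatF P π x t s p) -
    ((q - c) * pessA P π x t q - (p - c) * pessA P π x t p))

section PairDeviation
variable {P : Finset ℝ} {T : ℕ} {π x : Fin T → ℝ → ℝ} {c p q : ℝ}

lemma Rtilpq_sub_Rbarpq (ps : Fin T → ℝ) :
    Rtilpq P π x c p q ps - Rbarpq P π x c p q = ∑ t, pairDeviation P π x c p q t (ps t) := by
  rw [Rtilpq, Rbarpq, ← mul_sub, ← sum_sub_distrib, mul_sum]
  exact sum_congr rfl fun t _ => by rw [pairDeviation]; ring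

lemma sum_mul_pairDeviation {t : Fin T} (hπ : IsPMF P (π t)) :
    ∑ s ∈ P, π t s * pairDeviation P π x c p q t s = 0 := by
  have hlin : ∀ s, π t s * pairDeviation P π x c p q t s =
      (T : ℝ)⁻¹ * π t p * ((q - c) * (π t s * xhatF P π x t s q) -
        (p - c) * (π t s * xhatF P π x t s p) -
        ((q - c) * pessA P π x t q - (p - c) * pessA P π x t p) * π t s) := fun s => by
    rw [pairDeviation]; ring
  rw [sum_congr rfl fun s _ => hlin s, ← mul_sum, sum_sub_distrib, sum_sub_distrib, ← mul_sum,
    ← mul_sum, ← mul_sum, sum_mul_xhatF hπ, sum_mul_xhatF hπ, hπ.2.1]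
  ring

lemma abs_pairDeviation_le {t : Fin T} (hπ : IsPMF P (π t)) (hne : (suppF P (π t)).Nonempty)
    (hx : IsAllocSeq P x) (hP : P.Nonempty) (hc0 : 0 ≤ c) (hc1 : c ≤ P.min' hP)
    (hp : p ∈ P) (hq : q ∈ P) {s : ℝ} (hs : s ∈ suppF P (π t)) :
    |pairDeviation P π x c p q t s| ≤
      (T : ℝ)⁻¹ * (1 / (suppF P (π t)).inf' hne (π t) + 1) * P.max' hP := by
  set M := 1 / (suppF P (π t)).inf' hne (π t)
  set pbar := P.max' hP
  have hgain : ∀ r ∈ P, 0 ≤ r - c ∧ r - c ≤ pbar := fun r hr =>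
    ⟨by linarith [P.min'_le r hr], by linarith [P.le_max' r hr]⟩
  obtain ⟨hα0, hα1⟩ := hgain q hq
  obtain ⟨hβ0, hβ1⟩ := hgain p hp
  obtain ⟨hA0, hA1⟩ := xhatF_mem_Icc hπ hne hx hs q
  obtain ⟨hC0, hC1⟩ := xhatF_mem_Icc hπ hne hx hs p
  obtain ⟨hB0, hB1⟩ := pessA_mem_Icc (π := π) hx (t := t) q
  obtain ⟨hD0, hD1⟩ := pessA_mem_Icc (π := π) hx (t := t) p
  have hpbar : 0 ≤ pbar := hα0.trans hα1
  have hdiff : |((q - c) * xhatF P π x t s q - (p - c) * xhatF P π x t s p) -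
      ((q - c) * pessA P π x t q - (p - c) * pessA P π x t p)| ≤ (M + 1) * pbar := by
    -- both regrouped sums lie in `[0, (M + 1) * pbar]`
    rw [show ∀ a b e f : ℝ, (a - b) - (e - f) = (a + f) - (b + e) by intros; ring]
    apply abs_sub_le_of_nonneg_of_le <;> nlinarith [mul_le_mul hα1 hA1 hA0 hpbar,
      mul_le_mul hβ1 hD1 hD0 hpbar, mul_le_mul hβ1 hC1 hC0 hpbar, mul_le_mul hα1 hB1 hB0 hpbar]
  rw [pairDeviation, abs_mul, abs_of_nonneg (by have := hπ.1 p; positivity), mul_assoc,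
    mul_assoc]
  exact mul_le_mul_of_nonneg_left
    ((mul_le_of_le_one_left (abs_nonneg _) (hπ.le_one hp)).trans hdiff) (by positivity)

end PairDeviation

/-- one-sided concentration of the estimated regret
`R̃^T(c) = ∑_p max_q R̃^T_{p,q}(c)` around the pessimistic regret
`R̄^T(c) = ∑_p max_q R̄^T_{p,q}(c)`. -/
theorem estimated_regret_upper_concentration
    (P : Finset ℝ) (hP : P.Nonempty) (hpos : ∀ p ∈ P, 0 < p)
    {T : ℕ} (hT : 1 ≤ T) (π : Fin T → ℝ → ℝ)
    (hpmf : ∀ t, IsPMF P (π t)) (hsupp : ∀ t, (suppF P (π t)).Nonempty)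
    (x : Fin T → ℝ → ℝ) (hx : IsAllocSeq P x)
    (c : ℝ) (hc0 : 0 ≤ c) (hc1 : c ≤ P.min' hP) :
    ∀ ε : ℝ, 0 < ε →
      probM P π (fun ps =>
          ε ≤ (∑ p ∈ P, P.sup' hP fun q => Rtilpq P π x c p q ps) -
            ∑ p ∈ P, P.sup' hP fun q => Rbarpq P π x c p q) ≤
        2 * (P.card : ℝ) ^ 2 * Real.exp (-(ε ^ 2) / (2 * (P.card : ℝ) ^ 2 *
          ∑ t : Fin T,
            ((T : ℝ)⁻¹ * (1 / ((suppF P (π t)).inf' (hsupp t) (π t)) + 1) *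
              P.max' hP) ^ 2)) := by
  intro ε hε
  set D := ∑ t : Fin T,
    ((T : ℝ)⁻¹ * (1 / ((suppF P (π t)).inf' (hsupp t) (π t)) + 1) * P.max' hP) ^ 2
  have hk : (0 : ℝ) < P.card := by exact_mod_cast hP.card_pos
  have hD : 0 < D := by
    have := hpos _ (P.max'_mem hP)
    have : Nonempty (Fin T) := ⟨⟨0, hT⟩⟩
    refine sum_pos (fun t _ => pow_pos ?_ 2) univ_nonempty
    have := (lt_inf'_iff (hsupp t)).2 fun a ha => (mem_filter.1 ha).2
    positivity
  have hpair : ∀ i ∈ P ×ˢ P,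
      probM P π (fun ps => ε / P.card ≤ ∑ t, pairDeviation P π x c i.1 i.2 t (ps t)) ≤
        Real.exp (-(ε ^ 2) / (2 * P.card ^ 2 * D)) := by
    intro i hi
    obtain ⟨hp, hq⟩ := mem_product.1 hi
    have hexp : -(ε / P.card) ^ 2 / (2 * D) = -(ε ^ 2) / (2 * P.card ^ 2 * D) := by
      field_simp
    rw [← hexp]
    exact (probM_le_exp_of_le_sum hpmf (fun t => sum_mul_pairDeviation (hpmf t))
      (fun t s hs hπs => abs_pairDeviation_le (hpmf t) (hsupp t) hx hP hc0 hc1 hp hq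
        (mem_filter.2 ⟨hs, hπs⟩)) hD (by positivity))
  calc _ ≤ ∑ i ∈ P ×ˢ P, probM P π (fun ps => ε / P.card ≤
          ∑ t, pairDeviation P π x c i.1 i.2 t (ps t)) :=
        probM_le_sum_of_forall_exists (fun t => (hpmf t).1) fun ps h => by
          simpa only [Rtilpq_sub_Rbarpq] using exists_le_sub_of_le_sum_sup'_sub hP hP h
    _ ≤ ∑ i ∈ P ×ˢ P, Real.exp (-(ε ^ 2) / (2 * P.card ^ 2 * D)) := sum_le_sum hpair
    _ ≤ _ := by
        rw [sum_const, card_product, nsmul_eq_mul, Nat.cast_mul, ← sq]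
        nlinarith [Real.exp_pos (-(ε ^ 2) / (2 * P.card ^ 2 * D))]
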